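/- Fix κ² > 0, let α_κ > 0 be the unique solution of (1/2π) ∫_{−π}^{π} ( α² + κ² sin²x )^{−1/2} dx = 1, and set E_κ := ∫_{−π}^{π} √( 1 + (κ²/α_κ²) sin²x ) dx. Then for every C¹ function θ : [−π, π] → ℝ with θ(π) = θ(−π) − 2π (degree-zero class), ∫_{−π}^{π} ( |θ'(t) + 1|² + κ² sin²θ(t) ) dt ≥ −2π(1 + α_κ²) + 2 α_κ E_κ, and equality holds if and only if θ'(t) = −√( α_κ² + κ² sin²θ(t) ) for all t ∈ [−π, π]. -/

import Mathlib

/-! Bogomol'nyi trick. With `g = √(α² + κ² sin²θ)` one has pointwise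
`(θ' + 1)² + κ² sin²θ = (θ' + g)² + (1 - α²) + 2θ' - 2 g θ'`.
The last two terms integrate to constants fixed by the degree condition: `∫ θ' = -2π`, and
`∫ g θ' = -∫_{-π}^{π} √(α² + κ² sin²x) dx = -α E_κ` by substitution and `2π`-periodicity.
Hence the energy is `∫ (θ' + g)²` plus the bound, which is attained iff `θ' = -g`. -/

open Real Set MeasureTheory intervalIntegral Function

theorem integral_comp_mul_deriv_of_periodic {f θ : ℝ → ℝ} {T a b : ℝ} (hf : Continuous f)
    (hper : Periodic f T) (hθ : ContDiff ℝ 1 θ) (hdeg : θ b = θ a - T) (c : ℝ) :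
    ∫ t in a..b, f (θ t) * deriv θ t = -∫ x in c..c + T, f x := by
  have hsubst : ∫ t in a..b, f (θ t) * deriv θ t = ∫ x in θ a..θ b, f x :=
    integral_comp_mul_deriv (fun x _ => (hθ.differentiable one_ne_zero x).hasDerivAt)
      (hθ.continuous_deriv le_rfl).continuousOn hf
  rw [hsubst, integral_symm, hdeg, ← hper.intervalIntegral_add_eq (θ a - T) c, sub_add_cancel]

theorem integral_eq_zero_iff_of_nonneg_of_continuousOn {f : ℝ → ℝ} {a b : ℝ} (hab : a < b)
    (hfc : ContinuousOn f (Icc a b)) (hf : ∀ x ∈ Icc a b, 0 ≤ f x) :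
    ∫ x in a..b, f x = 0 ↔ ∀ x ∈ Icc a b, f x = 0 := by
  refine ⟨fun h0 x hx => ?_, fun h0 => ?_⟩
  · by_contra hne
    have hpos := integral_pos hab hfc (fun y hy => hf y (Ioc_subset_Icc_self hy))
      ⟨x, hx, (hf x hx).lt_of_ne' hne⟩
    exact hpos.ne' h0
  · rw [integral_congr (g := fun _ => 0) fun x hx => h0 x (uIcc_of_le hab.le ▸ hx)]
    exact integral_zero

theorem sqrt_sq_add_mul_eq_mul_sqrt {α : ℝ} (hα : 0 < α) (c s : ℝ) :
    √(α ^ 2 + c * s) = α * √(1 + c / α ^ 2 * s) := by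
  have hfactor : α ^ 2 + c * s = α ^ 2 * (1 + c / α ^ 2 * s) := by field_simp
  rw [hfactor, sqrt_mul (sq_nonneg α), sqrt_sq hα.le]

theorem integral_energy_eq_integral_sq_add (κ : ℝ) {α : ℝ} (hα : 0 < α) {θ : ℝ → ℝ}
    (hθ : ContDiff ℝ 1 θ) (hdeg : θ π = θ (-π) - 2 * π) :
    ∫ t in (-π)..π, ((deriv θ t + 1) ^ 2 + κ ^ 2 * sin (θ t) ^ 2)
      = (∫ t in (-π)..π, (deriv θ t + √(α ^ 2 + κ ^ 2 * sin (θ t) ^ 2)) ^ 2)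
        + (-(2 * π) * (1 + α ^ 2)
          + 2 * α * ∫ x in (-π)..π, √(1 + κ ^ 2 / α ^ 2 * sin x ^ 2)) := by
  set g : ℝ → ℝ := fun x => √(α ^ 2 + κ ^ 2 * sin x ^ 2) with hg
  have hgc : Continuous g := by fun_prop
  have hθ' : Continuous (deriv θ) := hθ.continuous_deriv le_rfl
  have hpointwise : ∀ t, (deriv θ t + 1) ^ 2 + κ ^ 2 * sin (θ t) ^ 2
      = (deriv θ t + g (θ t)) ^ 2 + (2 * deriv θ t + (1 - α ^ 2))
        - 2 * (g (θ t) * deriv θ t) := by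
    intro t
    have hg2 : g (θ t) ^ 2 = α ^ 2 + κ ^ 2 * sin (θ t) ^ 2 := sq_sqrt (by positivity)
    linear_combination -hg2
  have hlinear : ∫ t in (-π)..π, (2 * deriv θ t + (1 - α ^ 2)) = -(2 * π) * (1 + α ^ 2) := by
    rw [integral_add ((hθ'.const_mul 2).intervalIntegrable _ _) intervalIntegrable_const,
      intervalIntegral.integral_const_mul, integral_deriv_eq_sub (fun x _ => hθ.differentiable one_ne_zero x)
        (hθ'.intervalIntegrable _ _), intervalIntegral.integral_const, hdeg, smul_eq_mul]
    ring
  have hcross : ∫ t in (-π)..π, 2 * (g (θ t) * deriv θ t)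
      = -(2 * α * ∫ x in (-π)..π, √(1 + κ ^ 2 / α ^ 2 * sin x ^ 2)) := by
    have hper : Periodic g (2 * π) := fun x => by simp only [hg, sin_add_two_pi]
    rw [intervalIntegral.integral_const_mul, integral_comp_mul_deriv_of_periodic hgc hper hθ hdeg (-π),
      show -π + 2 * π = π by ring, hg]
    simp only [sqrt_sq_add_mul_eq_mul_sqrt hα, intervalIntegral.integral_const_mul]
    ring
  have hsq : IntervalIntegrable (fun t => (deriv θ t + g (θ t)) ^ 2) volume (-π) π :=
    ((hθ'.add (hgc.comp hθ.continuous)).pow 2).intervalIntegrable _ _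
  have hrest : IntervalIntegrable (fun t => 2 * deriv θ t + (1 - α ^ 2)) volume (-π) π :=
    ((hθ'.const_mul 2).add continuous_const).intervalIntegrable _ _
  have hprod : IntervalIntegrable (fun t => 2 * (g (θ t) * deriv θ t)) volume (-π) π :=
    (((hgc.comp hθ.continuous).mul hθ').const_mul 2).intervalIntegrable _ _
  simp only [hpointwise]
  rw [integral_sub (hsq.add hrest) hprod, integral_add hsq hrest, hlinear, hcross]
  ring

theorem degree_zero_inplane_bound
    (κ : ℝ)
    (α : ℝ) (hα : 0 < α)
    (θ : ℝ → ℝ) (hθ : ContDiff ℝ 1 θ)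
    (hdeg : θ π = θ (-π) - 2 * π) :
    -(2 * π) * (1 + α ^ 2)
        + 2 * α * (∫ x in (-π)..π, Real.sqrt (1 + κ ^ 2 / α ^ 2 * Real.sin x ^ 2))
      ≤ ∫ t in (-π)..π, ((deriv θ t + 1) ^ 2 + κ ^ 2 * Real.sin (θ t) ^ 2) ∧
    ((∫ t in (-π)..π, ((deriv θ t + 1) ^ 2 + κ ^ 2 * Real.sin (θ t) ^ 2))
        = -(2 * π) * (1 + α ^ 2)
            + 2 * α * (∫ x in (-π)..π, Real.sqrt (1 + κ ^ 2 / α ^ 2 * Real.sin x ^ 2)) ↔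
      ∀ t ∈ Icc (-π) π,
        deriv θ t = -Real.sqrt (α ^ 2 + κ ^ 2 * Real.sin (θ t) ^ 2)) := by
  have hπ : -π < π := neg_lt_self pi_pos
  have hθc : Continuous θ := hθ.continuous
  have hθ' : Continuous (deriv θ) := hθ.continuous_deriv le_rfl
  rw [integral_energy_eq_integral_sq_add κ hα hθ hdeg]
  have hdefect : 0 ≤ ∫ t in (-π)..π, (deriv θ t + √(α ^ 2 + κ ^ 2 * sin (θ t) ^ 2)) ^ 2 :=
    integral_nonneg hπ.le fun _ _ => sq_nonneg _
  refine ⟨le_add_of_nonneg_left hdefect, ?_⟩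
  rw [add_eq_right, integral_eq_zero_iff_of_nonneg_of_continuousOn hπ
    (by fun_prop : Continuous _).continuousOn fun _ _ => sq_nonneg _]
  simp only [sq_eq_zero_iff, add_eq_zero_iff_eq_neg]
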